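/- Let m ≥ 2. Every complex root t of every m-ary partition polynomial p_m(n,t) satisfies |t| < 4^{1/m}; in particular all such roots lie strictly inside the circle of radius 2 centered at the origin. -/

import Mathlib

/-!
Write `q j = p_m(m j, t)`. Then `p_m(m j + i, t) = t^i q j` for `i < m`, and
`q (j+1) = t^m q j + t^((j+1) mod m) q ((j+1)/m)`. If `|t|^m = s^2` with `s ≥ 2`, strong
induction gives `|q (j+1)| ≥ s |q j|`: with `k = (j+1)/m`, the growth already established gives
`|q j| ≥ s^(j-k) |q k|`, and `|t|^((j+1) mod m) ≤ s^(j-k+1)`, so the second summand is at most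
`s |q j|` and `|q (j+1)| ≥ (s^2 - s) |q j| ≥ s |q j|`. Hence `|q j| ≥ s^j > 0`, and
`p_m(n, t) = t^(n mod m) q (n/m)` cannot vanish when `|t|^m ≥ 4`.
-/

noncomputable def pm (m : ℕ) : ℕ → Polynomial ℤ
  | 0 => 1
  | n + 1 =>
      Polynomial.X * pm m n +
        if h : 2 ≤ m ∧ m ∣ (n + 1) then pm m ((n + 1) / m) else 0
decreasing_by
  · exact Nat.lt_succ_self n
  · exact Nat.div_lt_self (Nat.succ_pos n) (by omega)

open Polynomial

section Recurrence

variable {A : Type*} [Ring A] (t : A) {m : ℕ}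

lemma pm_zero (m : ℕ) : pm m 0 = 1 := by
  rw [pm]

lemma aeval_pm_succ_of_not_dvd {n : ℕ} (h : ¬ m ∣ n + 1) :
    aeval t (pm m (n + 1)) = t * aeval t (pm m n) := by
  rw [pm, dif_neg (fun h' => h h'.2)]
  simp

lemma aeval_pm_succ_of_dvd (hm : 2 ≤ m) {n : ℕ} (h : m ∣ n + 1) :
    aeval t (pm m (n + 1)) = t * aeval t (pm m n) + aeval t (pm m ((n + 1) / m)) := by
  rw [pm, dif_pos ⟨hm, h⟩]
  simp

lemma aeval_pm_mul_add (k : ℕ) {i : ℕ} (hi : i < m) :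
    aeval t (pm m (m * k + i)) = t ^ i * aeval t (pm m (m * k)) := by
  induction i with
  | zero => simp
  | succ i ih =>
    have hndvd : ¬ m ∣ m * k + i + 1 := by
      rw [add_assoc, Nat.dvd_add_right (dvd_mul_right m k)]
      exact Nat.not_dvd_of_pos_of_lt i.succ_pos hi
    rw [← add_assoc, aeval_pm_succ_of_not_dvd t hndvd, ih (by omega), pow_succ', mul_assoc]

lemma aeval_pm_eq_pow_mod_mul (hm : 0 < m) (n : ℕ) :
    aeval t (pm m n) = t ^ (n % m) * aeval t (pm m (m * (n / m))) := by
  conv_lhs => rw [← Nat.div_add_mod n m]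
  exact aeval_pm_mul_add t _ (Nat.mod_lt n hm)

lemma aeval_pm_mul_succ (hm : 2 ≤ m) (j : ℕ) :
    aeval t (pm m (m * (j + 1))) =
      t ^ m * aeval t (pm m (m * j)) + t ^ ((j + 1) % m) * aeval t (pm m (m * ((j + 1) / m))) := by
  have hidx : m * (j + 1) = m * j + (m - 1) + 1 := by rw [Nat.mul_succ]; omega
  have hdvd : m ∣ m * j + (m - 1) + 1 := hidx ▸ dvd_mul_right m (j + 1)
  rw [hidx, aeval_pm_succ_of_dvd t hm hdvd, ← hidx, Nat.mul_div_cancel_left _ (by omega),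
    aeval_pm_mul_add t j (by omega : m - 1 < m), ← mul_assoc, ← pow_succ',
    Nat.sub_add_cancel (by omega : 1 ≤ m), aeval_pm_eq_pow_mod_mul t (by omega) (j + 1)]

end Recurrence

lemma pow_sub_mul_le_of_mul_le_succ {u : ℕ → ℝ} {s : ℝ} (hs : 0 ≤ s) {k j : ℕ} (hkj : k ≤ j)
    (h : ∀ i, k ≤ i → i < j → s * u i ≤ u (i + 1)) : s ^ (j - k) * u k ≤ u j := by
  induction j, hkj using Nat.le_induction with
  | base => simp
  | succ j hkj ih =>
    calc s ^ (j + 1 - k) * u k = s * (s ^ (j - k) * u k) := by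
          rw [Nat.sub_add_comm hkj, pow_succ']; ring
      _ ≤ s * u j := mul_le_mul_of_nonneg_left (ih fun i hi hij => h i hi (by omega)) hs
      _ ≤ u (j + 1) := h j hkj (by omega)

section Growth

variable {K : Type*} [NormedDivisionRing K] {m : ℕ} {t : K} {s : ℝ}

lemma norm_pow_mod_le (hm : 2 ≤ m) (hs : 2 ≤ s) (hst : ‖t‖ ^ m = s ^ 2) (j : ℕ) :
    ‖t‖ ^ ((j + 1) % m) ≤ s ^ (j - (j + 1) / m + 1) := by
  have ht : 1 ≤ ‖t‖ := by
    by_contra! h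
    have : ‖t‖ ^ m ≤ 1 := pow_le_one₀ (norm_nonneg t) h.le
    nlinarith
  have hidx : 2 * ((j + 1) % m) ≤ m * (j - (j + 1) / m + 1) := by
    have hdm := Nat.div_add_mod (j + 1) m
    have hk : (j + 1) / m ≤ j := Nat.lt_succ_iff.mp (Nat.div_lt_self j.succ_pos hm)
    have he : m * (j - (j + 1) / m + 1) + m * ((j + 1) / m) = m * (j + 1) := by
      rw [← Nat.mul_add]; congr 1; omega
    have := Nat.mul_le_mul_right (j + 1) hm
    omega
  rw [← pow_le_pow_iff_left₀ (by positivity) (by positivity) two_ne_zero]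
  calc (‖t‖ ^ ((j + 1) % m)) ^ 2 = ‖t‖ ^ (2 * ((j + 1) % m)) := by ring
    _ ≤ ‖t‖ ^ (m * (j - (j + 1) / m + 1)) := pow_le_pow_right₀ ht hidx
    _ = (s ^ (j - (j + 1) / m + 1)) ^ 2 := by rw [pow_mul, hst]; ring

lemma mul_norm_le_norm_succ_of_recurrence (hm : 2 ≤ m) (hs : 2 ≤ s) (hst : ‖t‖ ^ m = s ^ 2)
    {q : ℕ → K} (hq : ∀ j, q (j + 1) = t ^ m * q j + t ^ ((j + 1) % m) * q ((j + 1) / m))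
    (j : ℕ) : s * ‖q j‖ ≤ ‖q (j + 1)‖ := by
  induction j using Nat.strong_induction_on with
  | _ j ih =>
  set k := (j + 1) / m
  have hk : k ≤ j := Nat.lt_succ_iff.mp (Nat.div_lt_self j.succ_pos hm)
  have hgeom : s ^ (j - k) * ‖q k‖ ≤ ‖q j‖ :=
    pow_sub_mul_le_of_mul_le_succ (by linarith) hk fun i _ hij => ih i hij
  have htail : ‖t ^ ((j + 1) % m) * q k‖ ≤ s * ‖q j‖ :=
    calc ‖t ^ ((j + 1) % m) * q k‖ = ‖t‖ ^ ((j + 1) % m) * ‖q k‖ := by rw [norm_mul, norm_pow]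
      _ ≤ s ^ (j - k + 1) * ‖q k‖ := by gcongr; exact norm_pow_mod_le hm hs hst j
      _ = s * (s ^ (j - k) * ‖q k‖) := by ring
      _ ≤ s * ‖q j‖ := by gcongr
  have htriangle : s ^ 2 * ‖q j‖ ≤ ‖q (j + 1)‖ + ‖t ^ ((j + 1) % m) * q k‖ := by
    rw [← hst, ← norm_pow, ← norm_mul, hq j]
    exact norm_le_add_norm_add _ _
  nlinarith [mul_nonneg (sub_nonneg.2 hs) (norm_nonneg (q j))]

lemma pow_le_norm_of_recurrence (hm : 2 ≤ m) (hs : 2 ≤ s) (hst : ‖t‖ ^ m = s ^ 2)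
    {q : ℕ → K} (hq0 : q 0 = 1)
    (hq : ∀ j, q (j + 1) = t ^ m * q j + t ^ ((j + 1) % m) * q ((j + 1) / m))
    (j : ℕ) : s ^ j ≤ ‖q j‖ := by
  simpa [hq0] using pow_sub_mul_le_of_mul_le_succ (u := fun i => ‖q i‖) (by linarith)
    (Nat.zero_le j) fun i _ _ => mul_norm_le_norm_succ_of_recurrence hm hs hst hq i

theorem aeval_pm_ne_zero (hm : 2 ≤ m) (ht : 4 ≤ ‖t‖ ^ m) (n : ℕ) : aeval t (pm m n) ≠ 0 := by
  set s := √(‖t‖ ^ m)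
  have hs : 2 ≤ s := Real.le_sqrt_of_sq_le (by linarith)
  have hst : ‖t‖ ^ m = s ^ 2 := (Real.sq_sqrt (by positivity)).symm
  have ht0 : t ≠ 0 := by
    rintro rfl
    rw [norm_zero, zero_pow (by omega)] at ht
    norm_num at ht
  have hq := pow_le_norm_of_recurrence (q := fun j => aeval t (pm m (m * j))) hm hs hst
    (by simp [pm_zero]) (aeval_pm_mul_succ t hm) (n / m)
  rw [aeval_pm_eq_pow_mod_mul t (by omega)]
  exact mul_ne_zero (pow_ne_zero _ ht0) (norm_pos_iff.mp ((pow_pos (by linarith) _).trans_le hq))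

end Growth

/-- Every complex root of p_m(n,t) has absolute value less than 4^(1/m) ≤ 2. -/
theorem pm_roots_bound (m : ℕ) (hm : 2 ≤ m) (n : ℕ) (t : ℂ)
    (h : (Polynomial.aeval t) (pm m n) = 0) :
    ‖t‖ < (4 : ℝ) ^ ((1 : ℝ) / (m : ℝ)) ∧ ‖t‖ < 2 := by
  have hpow : ‖t‖ ^ m < 4 := by
    by_contra! h4
    exact aeval_pm_ne_zero hm h4 n h
  refine ⟨?_, ?_⟩
  · rw [one_div, Real.lt_rpow_inv_iff_of_pos (norm_nonneg t) (by norm_num) (by positivity),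
      Real.rpow_natCast]
    exact hpow
  · by_contra! h2
    have : (2 : ℝ) ^ 2 ≤ ‖t‖ ^ m := (pow_le_pow_right₀ one_le_two hm).trans (by gcongr)
    linarith
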